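/- arXiv:1804.01172 — 2 statements merged into one kernel-verified Lean document; each statement's English description precedes it below -/
import Mathlib

section
/- Let A and B be symmetric sequences of length n with entries in {±1}. If PSD_A(s) + PSD_B(s) > 4n for some integer s, then there do not exist sequences C, D such that A, B, C, D form a Williamson sequence. -/
/-- The periodic autocorrelation function of the length-`n` sequence `a`. -/
def paf (n : ℕ) (a : ℕ → ℤ) (s : ℕ) : ℤ :=
  ∑ k ∈ Finset.range n, a k * a ((k + s) % n)

/-- `a` is a symmetric sequence of length `n`: `aᵢ = a_{n-i}` for `1 ≤ i < n`. -/
def SymmSeq (n : ℕ) (a : ℕ → ℤ) : Prop := ∀ i, 1 ≤ i → i < n → a i = a (n - i)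

/-- All entries of the length-`n` sequence `a` are `±1`. -/
def PMOne (n : ℕ) (a : ℕ → ℤ) : Prop := ∀ i < n, a i = 1 ∨ a i = -1

/-- `a,b,c,d` are Williamson sequences of order `n`. -/
def IsWilliamson (n : ℕ) (a b c d : ℕ → ℤ) : Prop :=
  SymmSeq n a ∧ SymmSeq n b ∧ SymmSeq n c ∧ SymmSeq n d ∧
  PMOne n a ∧ PMOne n b ∧ PMOne n c ∧ PMOne n d ∧
  ∀ s, 1 ≤ s → s ≤ n / 2 → paf n a s + paf n b s + paf n c s + paf n d s = 0

/-- The discrete Fourier transform of the length-`n` sequence `a`. -/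
noncomputable def dft (n : ℕ) (a : ℕ → ℤ) (s : ℤ) : ℂ :=
  ∑ k ∈ Finset.range n, (a k : ℂ) * Complex.exp (2 * Real.pi * Complex.I * k * s / n)

/-- The power spectral density of the length-`n` sequence `a`. -/
noncomputable def psd (n : ℕ) (a : ℕ → ℤ) (s : ℤ) : ℝ :=
  ‖dft n a s‖ ^ 2

/-
The PSD of a sequence is the Fourier transform of its PAF. Every PAF satisfies
PAF(n - t) = PAF(t), so the Williamson condition makes the four PAFs sum to zero at every
nonzero shift, while a ±1 sequence has PAF(0) = n; hence the four PSDs add up to 4n at every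
frequency. As PSDs are nonnegative, those of A and B alone cannot exceed 4n.
-/

open Finset ComplexConjugate

lemma sum_range_comp_add_mod {M : Type*} [AddCommMonoid M] {n j : ℕ} (hj : j < n) (F : ℕ → M) :
    ∑ t ∈ range n, F ((j + t) % n) = ∑ k ∈ range n, F k := by
  have : NeZero n := ⟨by omega⟩
  rw [← Fin.sum_univ_eq_sum_range, ← Fin.sum_univ_eq_sum_range]
  simpa only [Equiv.coe_addLeft, Fin.val_add] using
    Equiv.sum_comp (Equiv.addLeft (⟨j, hj⟩ : Fin n)) (F ·)

lemma exp_two_pi_I_int_div_pow_self (n : ℕ) (s : ℤ) :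
    Complex.exp (2 * Real.pi * Complex.I * s / n) ^ n = 1 := by
  rcases eq_or_ne n 0 with rfl | hn
  · rfl
  rw [← Complex.exp_nat_mul, ← Complex.exp_int_mul_two_pi_mul_I s]
  congr 1
  field_simp

lemma dft_eq_sum_pow (n : ℕ) (a : ℕ → ℤ) (s : ℤ) :
    dft n a s = ∑ k ∈ range n, (a k : ℂ) * Complex.exp (2 * Real.pi * Complex.I * s / n) ^ k := by
  refine sum_congr rfl fun k _ => ?_
  rw [← Complex.exp_nat_mul]
  ring_nf

lemma sq_norm_sum_pow_eq_sum_paf {n : ℕ} {z : ℂ} (hz : z ^ n = 1) (a : ℕ → ℤ) :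
    ((‖∑ k ∈ range n, (a k : ℂ) * z ^ k‖ ^ 2 : ℝ) : ℂ) =
      ∑ t ∈ range n, (paf n a t : ℂ) * z ^ t := by
  rcases n.eq_zero_or_pos with rfl | hn
  · simp
  have hconj : conj z * z = 1 := by
    rw [mul_comm, Complex.mul_conj', Complex.norm_eq_one_of_pow_eq_one hz hn.ne']
    simp
  calc ((‖∑ k ∈ range n, (a k : ℂ) * z ^ k‖ ^ 2 : ℝ) : ℂ)
      = ∑ k ∈ range n, ∑ j ∈ range n, ((a k : ℂ) * conj z ^ k) * ((a j : ℂ) * z ^ j) := by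
        push_cast
        rw [← Complex.mul_conj', map_sum, sum_mul_sum, sum_comm]
        simp only [map_mul, map_pow, map_intCast, mul_comm]
    _ = ∑ k ∈ range n, ∑ t ∈ range n, ((a k : ℂ) * a ((k + t) % n)) * z ^ t := by
        refine sum_congr rfl fun k hk => ?_
        rw [← sum_range_comp_add_mod (mem_range.mp hk)]
        refine sum_congr rfl fun t _ => ?_
        -- `z ^ ((k + t) % n) = z ^ k * z ^ t`, and `conj z ^ k * z ^ k = 1`
        rw [← pow_eq_pow_mod _ hz, pow_add]
        linear_combination (a k * a ((k + t) % n) * z ^ t : ℂ) * congrArg (· ^ k) hconj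
    _ = ∑ t ∈ range n, (paf n a t : ℂ) * z ^ t := by
        rw [sum_comm]
        simp only [paf, ← sum_mul, Int.cast_sum, Int.cast_mul]

lemma psd_eq_sum_paf (n : ℕ) (a : ℕ → ℤ) (s : ℤ) :
    (psd n a s : ℂ) =
      ∑ t ∈ range n, (paf n a t : ℂ) * Complex.exp (2 * Real.pi * Complex.I * s / n) ^ t := by
  rw [psd, dft_eq_sum_pow, sq_norm_sum_pow_eq_sum_paf (exp_two_pi_I_int_div_pow_self n s)]

lemma paf_zero_of_pmOne {n : ℕ} {a : ℕ → ℤ} (ha : PMOne n a) : paf n a 0 = n := by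
  rw [paf, sum_congr rfl fun k hk => ?_, sum_const, card_range, nsmul_one]
  rw [Nat.add_zero, Nat.mod_eq_of_lt (mem_range.mp hk)]
  rcases ha k (mem_range.mp hk) with h | h <;> simp [h]

lemma paf_sub {n t : ℕ} (a : ℕ → ℤ) (ht : t < n) : paf n a (n - t) = paf n a t := by
  rw [paf, paf, ← sum_range_comp_add_mod ht]
  refine sum_congr rfl fun k hk => ?_
  rw [Nat.mod_add_mod, show t + k + (n - t) = k + n by omega, Nat.add_mod_right,
    Nat.mod_eq_of_lt (mem_range.mp hk), mul_comm, Nat.add_comm]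

namespace IsWilliamson

variable {n : ℕ} {a b c d : ℕ → ℤ}

lemma paf_add_eq_zero (h : IsWilliamson n a b c d) {t : ℕ} (ht₀ : 1 ≤ t) (ht : t < n) :
    paf n a t + paf n b t + paf n c t + paf n d t = 0 := by
  obtain ⟨-, -, -, -, -, -, -, -, hpaf⟩ := h
  rcases le_or_gt t (n / 2) with hle | hgt
  · exact hpaf t ht₀ hle
  · rw [← paf_sub a ht, ← paf_sub b ht, ← paf_sub c ht, ← paf_sub d ht]
    exact hpaf (n - t) (by omega) (by omega)

lemma psd_add_eq (h : IsWilliamson n a b c d) (s : ℤ) :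
    psd n a s + psd n b s + psd n c s + psd n d s = 4 * n := by
  obtain ⟨-, -, -, -, ha, hb, hc, hd, -⟩ := id h
  apply Complex.ofReal_injective
  push_cast
  simp only [psd_eq_sum_paf, ← sum_add_distrib, ← add_mul, ← Int.cast_add]
  rw [sum_eq_single 0 (fun t ht ht₀ => by
      rw [h.paf_add_eq_zero (Nat.one_le_iff_ne_zero.mpr ht₀) (mem_range.mp ht)]; simp)
    (fun h₀ => by simp [paf, show n = 0 by simpa using h₀])]
  rw [paf_zero_of_pmOne ha, paf_zero_of_pmOne hb, paf_zero_of_pmOne hc, paf_zero_of_pmOne hd]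
  push_cast
  ring

end IsWilliamson

theorem psd_test_two_general (n : ℕ) (a b : ℕ → ℤ)
    (s : ℤ) (hs : psd n a s + psd n b s > 4 * n) :
    ¬ ∃ c d : ℕ → ℤ, IsWilliamson n a b c d := by
  rintro ⟨c, d, h⟩
  have hc : 0 ≤ psd n c s := sq_nonneg _
  have hd : 0 ≤ psd n d s := sq_nonneg _
  linarith [h.psd_add_eq s]

theorem psd_test_two (n : ℕ) (a b : ℕ → ℤ)
    (hsa : SymmSeq n a) (hsb : SymmSeq n b) (hpa : PMOne n a) (hpb : PMOne n b)
    (s : ℤ) (hs : psd n a s + psd n b s > 4 * n) :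
    ¬ ∃ c d : ℕ → ℤ, IsWilliamson n a b c d :=
  psd_test_two_general n a b s hs
end

section
/- Let A, B, C, D be a Williamson sequence of even order n = 2m, and let A′, B′, C′, D′ be their 2-compressions (sequences of length m). Then a′_j + b′_j + c′_j + d′_j ≡ 0 (mod 4) for all j = 0, …, m−1. -/
/-!
Write each sequence as `2βᵢ + 1` on `ZMod (2m)`. Expanding the autocorrelations, the Williamson
condition becomes `E(c) + S + 2m = 0` for all `c ≠ 0`, where `E(c) = ∑ᵢ ∑ₖ βᵢ(k) βᵢ(k + c)` and
`S = ∑ᵢ ∑ₖ βᵢ(k)`. Modulo 2 the symmetry `βᵢ(-k) = βᵢ(k)` lets the involution `k ↦ -k - c` cancel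
the terms of `E(c)` in pairs, so only the solutions of `2k = -c` survive. For `c = -1` there are
none, hence `S` is even; for `c = -2j ≠ 0` they are `j` and `j + m`, hence
`w(j) + w(j + m)` is even, where `w(k) = ∑ᵢ βᵢ(k)`. The cosets `{k, k + m}` partition `ZMod (2m)`
and `∑ₖ w(k) = S`, which settles the remaining `j ∈ {0, m}`. Finally the compressed sum at `j` is
`8 + 2 ∑ᵢ (βᵢ(j) + βᵢ(j + m))`.
-/

open Finset

section Autocorrelation

variable {G R S : Type*} [AddCommGroup G] [Fintype G] [CommRing R] [CommRing S]

def autocorr (f : G → R) (c : G) : R := ∑ k, f k * f (k + c)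

theorem autocorr_neg (f : G → R) (c : G) : autocorr f (-c) = autocorr f c := by
  rw [autocorr, ← Equiv.sum_comp (Equiv.addRight c)]
  simp only [Equiv.coe_addRight, add_neg_cancel_right, mul_comm, autocorr]

theorem autocorr_two_mul_add_one (β : G → R) (c : G) :
    autocorr (fun k => 2 * β k + 1) c = 4 * autocorr β c + 4 * ∑ k, β k + Fintype.card G := by
  have hshift : ∑ k, β (k + c) = ∑ k, β k := Equiv.sum_comp (Equiv.addRight c) β
  calc ∑ k, (2 * β k + 1) * (2 * β (k + c) + 1)
      = ∑ k, (4 * (β k * β (k + c)) + 2 * β k + 2 * β (k + c) + 1) := by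
        congr! 1 with k; ring
    _ = _ := by
        simp only [sum_add_distrib, ← mul_sum, hshift, sum_const, card_univ,
          nsmul_one, autocorr]
        ring

theorem autocorr_eq_sum_filter_add_self [DecidableEq G] (b : G → ZMod 2)
    (hb : ∀ k, b (-k) = b k) (c : G) :
    autocorr b c = ∑ k with k + k = -c, b k := by
  rw [autocorr, ← sum_filter_add_sum_filter_not univ (fun k => k + k = -c)]
  have hfixed : ∀ k ∈ univ.filter (fun k => k + k = -c), b k * b (k + c) = b k := by
    intro k hk
    rw [mem_filter] at hk
    rw [show k + c = -k by linear_combination (norm := module) hk.2, hb, ← sq, ZMod.pow_card]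
  have hpaired : ∑ k with ¬ k + k = -c, b k * b (k + c) = 0 := by
    refine sum_involution (fun k _ => -k - c) (fun k _ => ?_) (fun k hk _ h => ?_)
      (fun k hk => ?_) (fun k _ => by abel)
    · rw [show -k - c + c = -k by abel, show -k - c = -(k + c) by abel, hb, hb, mul_comm]
      exact CharTwo.add_self_eq_zero _
    · exact (mem_filter.mp hk).2 (by linear_combination (norm := module) -h)
    · simp only [mem_filter, mem_univ, true_and] at hk ⊢
      exact fun h => hk (by linear_combination (norm := module) -h)
  rw [sum_congr rfl hfixed, hpaired, add_zero]

theorem RingHom.map_autocorr (φ : R →+* S) (f : G → R) (c : G) :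
    φ (autocorr f c) = autocorr (φ ∘ f) c := by
  simp only [autocorr, map_sum, map_mul, Function.comp_apply]

end Autocorrelation

theorem sum_filter_add_self_add_sum_eq_card {G : Type*} [AddCommGroup G] [Fintype G]
    [DecidableEq G] (β : Fin 4 → G → ℤ) (hβ : ∀ i k, β i (-k) = β i k)
    (hpaf : ∀ c ≠ 0, ∑ i, autocorr (fun k => 2 * β i k + 1) c = 0) {c : G} (hc : c ≠ 0) :
    ∑ k with k + k = -c, ∑ i, (β i k : ZMod 2) + ∑ k, ∑ i, (β i k : ZMod 2) =
      Fintype.card G := by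
  have hsum : ∑ i, autocorr (β i) c + ∑ i, ∑ k, β i k + Fintype.card G = 0 := by
    have h := hpaf c hc
    simp only [autocorr_two_mul_add_one, sum_add_distrib, ← mul_sum, sum_const, card_univ,
      Fintype.card_fin, nsmul_eq_mul] at h
    push_cast at h
    linarith
  have hmod := congrArg (Int.castRingHom (ZMod 2)) hsum
  simp only [map_add, map_sum, RingHom.map_autocorr, map_natCast, map_zero] at hmod
  have hfilter : ∀ i, autocorr (Int.castRingHom (ZMod 2) ∘ β i) c =
      ∑ k with k + k = -c, (β i k : ZMod 2) := fun i => by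
    rw [autocorr_eq_sum_filter_add_self _ fun k => by simp [hβ]]
    simp
  simp only [hfilter, eq_intCast] at hmod
  rw [← CharTwo.add_eq_zero, ← hmod, sum_comm, sum_comm (s := univ) (t := univ)]

namespace ZMod

theorem apply_eq_zero_of_forall_natCast_le_half {n : ℕ} [NeZero n] {M : Type*} [Zero M]
    {F : ZMod n → M} (hneg : ∀ c, F (-c) = F c) (hF : ∀ s : ℕ, 1 ≤ s → s ≤ n / 2 → F s = 0)
    {c : ZMod n} (hc : c ≠ 0) : F c = 0 := by
  have hs : 1 ≤ c.valMinAbs.natAbs := by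
    rw [Nat.one_le_iff_ne_zero, Ne, Int.natAbs_eq_zero, valMinAbs_eq_zero]
    exact hc
  have h := hF _ hs (natAbs_valMinAbs_le c)
  rw [natCast_natAbs_valMinAbs] at h
  split_ifs at h
  · exact h
  · rwa [hneg] at h

variable {m : ℕ}

theorem natCast_half_add_self : (m : ZMod (2 * m)) + m = 0 := by
  rw [← two_mul]; exact_mod_cast natCast_self (2 * m)

theorem add_self_ne_one (k : ZMod (2 * m)) : k + k ≠ 1 := by
  intro h
  have h2 := congrArg (castHom (dvd_mul_right 2 m) (ZMod 2)) h
  rw [map_add, CharTwo.add_self_eq_zero, map_one] at h2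
  exact zero_ne_one h2

variable [NeZero m]

theorem natCast_half_ne_zero : (m : ZMod (2 * m)) ≠ 0 := by
  rw [Ne, natCast_eq_zero_iff]
  intro h
  have := Nat.le_of_dvd (Nat.pos_of_neZero m) h
  have := NeZero.ne m
  omega

theorem add_self_eq_zero_iff {x : ZMod (2 * m)} : x + x = 0 ↔ x = 0 ∨ x = m := by
  constructor
  · intro h
    have hdvd : 2 * m ∣ 2 * x.val := by
      rw [← natCast_eq_zero_iff, Nat.cast_mul, Nat.cast_ofNat, natCast_zmod_val, two_mul x, h]
    obtain ⟨q, hq⟩ := (Nat.mul_dvd_mul_iff_left two_pos).mp hdvd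
    have hq2 : q < 2 := by
      have := val_lt x
      by_contra!
      nlinarith
    interval_cases q
    · left; rwa [mul_zero, val_eq_zero] at hq
    · right; rw [← natCast_zmod_val x, hq, mul_one]
  · rintro (rfl | rfl)
    · exact add_zero 0
    · exact natCast_half_add_self

theorem add_self_eq_add_self_iff {j k : ZMod (2 * m)} : k + k = j + j ↔ k = j ∨ k = j + m := by
  rw [← sub_eq_zero, show k + k - (j + j) = (k - j) + (k - j) by abel, add_self_eq_zero_iff,
    sub_eq_zero, sub_eq_iff_eq_add']

theorem add_add_half_eq_zero {M : Type*} [AddCommMonoid M] (w : ZMod (2 * m) → M)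
    (hw : ∀ j, j + j ≠ 0 → w j + w (j + m) = 0) (hsum : ∑ k, w k = 0) (j : ZMod (2 * m)) :
    w j + w (j + m) = 0 := by
  have hpairs : ∑ k with ¬ k + k = 0, w k = 0 := by
    refine sum_involution (fun k _ => k + m) (fun k hk => hw k (mem_filter.mp hk).2)
      (fun k _ _ h => natCast_half_ne_zero (by simpa using h)) (fun k hk => ?_)
      (fun k _ => by rw [add_assoc, natCast_half_add_self, add_zero])
    simpa [add_add_add_comm _ (m : ZMod (2 * m)), natCast_half_add_self] using hk
  have hfixed : w 0 + w m = 0 := by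
    have hzeros : univ.filter (fun k : ZMod (2 * m) => k + k = 0) = {0, (m : ZMod (2 * m))} := by
      ext k; simp [add_self_eq_zero_iff]
    rw [← hsum, ← sum_filter_add_sum_filter_not univ (fun k => k + k = 0), hpairs, add_zero,
      hzeros, sum_pair natCast_half_ne_zero.symm]
  by_cases hj : j + j = 0
  · rcases add_self_eq_zero_iff.mp hj with rfl | rfl
    · rwa [zero_add]
    · rwa [natCast_half_add_self, add_comm]
  · exact hw j hj

end ZMod

theorem four_dvd_sum_add_add_half {m : ℕ} [NeZero m] (f : Fin 4 → ZMod (2 * m) → ℤ)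
    (hodd : ∀ i k, Odd (f i k)) (heven : ∀ i k, f i (-k) = f i k)
    (hpaf : ∀ c ≠ 0, ∑ i, autocorr (f i) c = 0) (j : ZMod (2 * m)) :
    4 ∣ ∑ i, (f i j + f i (j + m)) := by
  choose β hβ using hodd
  obtain rfl : f = fun i k => 2 * β i k + 1 := funext₂ hβ
  have hβ_even : ∀ i k, β i (-k) = β i k := fun i k => by
    have := heven i k
    dsimp only at this
    omega
  set w : ZMod (2 * m) → ZMod 2 := fun k => ∑ i, (β i k : ZMod 2)
  have hcard : (Fintype.card (ZMod (2 * m)) : ZMod 2) = 0 := by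
    rw [ZMod.card, ZMod.natCast_eq_zero_iff]
    exact dvd_mul_right 2 m
  have hfilter : ∀ c ≠ 0, ∑ k with k + k = -c, w k + ∑ k, w k = 0 := fun c hc =>
    (sum_filter_add_self_add_sum_eq_card β hβ_even hpaf hc).trans hcard
  have hone : (1 : ZMod (2 * m)) ≠ 0 := fun h => ZMod.add_self_ne_one 0 (by rw [add_zero, h])
  have hsum : ∑ k, w k = 0 := by
    have h := hfilter (-1) (neg_ne_zero.mpr hone)
    rwa [neg_neg, filter_false_of_mem fun k _ => ZMod.add_self_ne_one k, sum_empty,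
      zero_add] at h
  have hpair : ∀ j, j + j ≠ 0 → w j + w (j + m) = 0 := by
    intro j hj
    have hfixed : univ.filter (fun k => k + k = j + j) = {j, j + (m : ZMod (2 * m))} := by
      ext k; simp [ZMod.add_self_eq_add_self_iff]
    have h := hfilter (-(j + j)) (neg_ne_zero.mpr hj)
    have hne : j ≠ j + m := by simpa using ZMod.natCast_half_ne_zero (m := m)
    rwa [neg_neg, hfixed, sum_pair hne, hsum, add_zero] at h
  obtain ⟨t, ht⟩ : Even (∑ i, (β i j + β i (j + m))) := by
    rw [← ZMod.intCast_eq_zero_iff_even]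
    push_cast
    rw [sum_add_distrib]
    exact ZMod.add_add_half_eq_zero w hpair hsum j
  have hexpand : ∑ i, (2 * β i j + 1 + (2 * β i (j + m) + 1)) =
      2 * (∑ i, (β i j + β i (j + m)) + 4) := by
    simp only [sum_add_distrib, ← mul_sum, sum_const, card_univ, Fintype.card_fin]
    ring
  exact ⟨t + 2, by rw [hexpand, ht]; ring⟩

theorem paf_eq_autocorr {n : ℕ} [NeZero n] (x : ℕ → ℤ) (s : ℕ) :
    paf n x s = autocorr (fun k : ZMod n => x k.val) s := by
  refine sum_nbij' (↑) ZMod.val (fun _ _ => mem_univ _) (fun k _ => mem_range.mpr k.val_lt)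
    (fun r hr => ZMod.val_natCast_of_lt (mem_range.mp hr)) (fun k _ => ZMod.natCast_zmod_val k)
    (fun r hr => ?_)
  dsimp only
  rw [← Nat.cast_add, ZMod.val_natCast_of_lt (mem_range.mp hr), ZMod.val_natCast]

theorem SymmSeq.val_neg {n : ℕ} [NeZero n] {x : ℕ → ℤ} (hx : SymmSeq n x) (k : ZMod n) :
    x (-k).val = x k.val := by
  rcases eq_or_ne k 0 with rfl | hk
  · rw [neg_zero]
  · have : NeZero k := ⟨hk⟩
    rw [ZMod.val_neg_of_ne_zero, hx k.val _ k.val_lt]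
    exact Nat.one_le_iff_ne_zero.mpr ((ZMod.val_ne_zero k).mpr hk)

theorem PMOne.odd {n : ℕ} {x : ℕ → ℤ} (hx : PMOne n x) {i : ℕ} (hi : i < n) : Odd (x i) := by
  rcases hx i hi with h | h <;> rw [h]
  exacts [odd_one, odd_neg_one]

theorem williamson_two_compression_mod_four (n m : ℕ) (hn : n = 2 * m) (a b c d : ℕ → ℤ)
    (hW : IsWilliamson n a b c d) :
    ∀ j < m, (4 : ℤ) ∣
      ((a j + a (j + m)) + (b j + b (j + m)) + (c j + c (j + m)) + (d j + d (j + m))) := by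
  subst hn
  intro j hj
  have : NeZero m := ⟨by omega⟩
  obtain ⟨sa, sb, sc, sd, pa, pb, pc, pd, hpaf⟩ := hW
  let f : Fin 4 → ZMod (2 * m) → ℤ := fun i k => ![a, b, c, d] i k.val
  have hodd : ∀ i k, Odd (f i k) := by
    intro i k
    fin_cases i
    exacts [pa.odd k.val_lt, pb.odd k.val_lt, pc.odd k.val_lt, pd.odd k.val_lt]
  have heven : ∀ i k, f i (-k) = f i k := by
    intro i k
    fin_cases i
    exacts [sa.val_neg k, sb.val_neg k, sc.val_neg k, sd.val_neg k]
  have hpaf_zmod : ∀ t ≠ 0, ∑ i, autocorr (f i) t = 0 :=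
    fun t => ZMod.apply_eq_zero_of_forall_natCast_le_half (F := fun t => ∑ i, autocorr (f i) t)
      (fun t => by simp only [autocorr_neg])
      fun s h1 h2 => by simpa [Fin.sum_univ_four, f, paf_eq_autocorr] using hpaf s h1 h2
  have hj_val : (j : ZMod (2 * m)).val = j := ZMod.val_natCast_of_lt (by omega)
  have hjm_val : ((j : ZMod (2 * m)) + m).val = j + m := by
    rw [← Nat.cast_add, ZMod.val_natCast_of_lt (by omega)]
  simpa [Fin.sum_univ_four, f, hj_val, hjm_val, add_assoc] using
    four_dvd_sum_add_add_half f hodd heven hpaf_zmod j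
end
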